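/- Let n ≥ 0 and let w and w̃ be two words of the Jacquard language J_n with w ≠ w̃. Then there exists an integer i_0 ≥ 2 such that β_{i_0}(w) ≠ β_{i_0}(w̃). Equivalently, the map sending a word w ∈ J_n to the sequence (β_i(w))_{i ≥ 2} is injective on J_n. (This is the combinatorial core of the paper's Theorem 5.4: two Goursat structures have the same growth vector at a point if and only if they have the same singularity type there.) -/
import Mathlib


/-- The Jacquard languages: `Jacquard 0 = {ε}`, `Jacquard 1 = {a₀}`, and, for `n ≥ 2`,
`Jacquard n = Jacquard (n-1)·a₀ ∪ ⋃_{1 ≤ j ≤ n-1} Jacquard (n-j)·(a₁a₂⋯a_j)`,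
where a letter `a_j` is modeled by the natural number `j` and a word by a list. -/
def Jacquard : ℕ → Set (List ℕ)
  | 0 => {[]}
  | 1 => {[0]}
  | n + 2 =>
      ((· ++ [0]) '' Jacquard (n + 1)) ∪
        ⋃ (j : ℕ) (_ : 1 ≤ j ∧ j ≤ n + 1),
          (· ++ (List.range j).map (· + 1)) '' Jacquard (n + 2 - j)
  termination_by n => n
  decreasing_by all_goals omega

/-- Jean's functions `β_i` on words (the shift `w'` of a word is `w.dropLast`):
`β₂ = 1`, `β₃ = 2`, `β₄ = 3`, and, for `i ≥ 5`,
`β_i(w) = β_{i-1}(w') + β_{i-2}(w'')` if the last letter of `w` is `a₁`,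
`β_i(w) = 2β_{i-1}(w') - β_{i-2}(w'')` if the last letter of `w` is `a_k`, `k ≥ 2`,
`β_i(w) = β_{i-1}(w') + 1` otherwise (i.e. `w` empty or ending with `a₀`).
(The unused values `β₀` and `β₁` are set to `0`.) -/
def beta : ℕ → List ℕ → ℤ
  | 0, _ => 0
  | 1, _ => 0
  | 2, _ => 1
  | 3, _ => 2
  | 4, _ => 3
  | i + 5, w =>
      match w.getLast? with
      | some 1 => beta (i + 4) w.dropLast + beta (i + 3) w.dropLast.dropLast
      | some (_ + 2) => 2 * beta (i + 4) w.dropLast - beta (i + 3) w.dropLast.dropLast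
      | _ => beta (i + 4) w.dropLast + 1

lemma beta_two (u : List ℕ) : beta 2 u = 1 := rfl
lemma beta_three (u : List ℕ) : beta 3 u = 2 := rfl
lemma beta_four (u : List ℕ) : beta 4 u = 3 := rfl
lemma beta_nil (i : ℕ) : beta (i+5) ([] : List ℕ) = beta (i+4) ([] : List ℕ) + 1 := by
  simp [beta]
lemma beta_concat_zero (i : ℕ) (u : List ℕ) :
    beta (i+5) (u ++ [0]) = beta (i+4) u + 1 := by
  have h1 : (u ++ [0]).getLast? = some 0 := by simp
  have h2 : (u ++ [0]).dropLast = u := by simp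
  simp [beta, h1, h2]
lemma beta_concat_one (i : ℕ) (u : List ℕ) :
    beta (i+5) (u ++ [1]) = beta (i+4) u + beta (i+3) u.dropLast := by
  have h1 : (u ++ [1]).getLast? = some 1 := by simp
  have h2 : (u ++ [1]).dropLast = u := by simp
  simp [beta, h1, h2]
lemma beta_concat_big (i c : ℕ) (u : List ℕ) :
    beta (i+5) (u ++ [c+2]) = 2 * beta (i+4) u - beta (i+3) u.dropLast := by
  have h1 : (u ++ [c+2]).getLast? = some (c+2) := by simp
  have h2 : (u ++ [c+2]).dropLast = u := by simp
  simp [beta, h1, h2]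

/-- joint positivity: `β_{m+2} ≥ m+1` and `β_{m+3}(u) ≥ β_{m+2}(u') + 1`. -/
lemma beta_pos (m : ℕ) :
    (∀ u : List ℕ, (m : ℤ) + 1 ≤ beta (m+2) u) ∧
      (∀ u : List ℕ, beta (m+2) u.dropLast + 1 ≤ beta (m+3) u) := by
  induction m using Nat.strong_induction_on with
  | _ m ih =>
    match m with
    | 0 => exact ⟨fun u => by simp [beta_two], fun u => by simp [beta_two, beta_three]⟩
    | 1 => exact ⟨fun u => by simp [beta_three], fun u => by simp [beta_three, beta_four]⟩
    | (m+2) =>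
      have ih1 := ih (m+1) (by omega)
      constructor
      · intro u
        have h2 := ih1.2 u
        have h1 := ih1.1 u.dropLast
        simp only [show m+1+3 = m+4 from rfl, show m+1+2 = m+3 from rfl] at h1 h2
        show (↑(m+2):ℤ) + 1 ≤ beta (m+4) u
        push_cast
        push_cast at h1
        omega
      · intro u
        show beta (m+4) u.dropLast + 1 ≤ beta (m+5) u
        rcases u.eq_nil_or_concat' with rfl | ⟨v, a, rfl⟩
        · rw [beta_nil]; simp
        · match a with
          | 0 =>
            rw [beta_concat_zero]
            simp
          | 1 =>
            rw [beta_concat_one]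
            have h1 := ih1.1 v.dropLast
            have h2 : ((v ++ [1]).dropLast) = v := by simp
            rw [h2]
            have : (0:ℤ) < beta (m+3) v.dropLast := by
              have h5 := (ih (m+1) (by omega)).1 v.dropLast
              simp only [show m+1+2 = m+3 from rfl] at h5
              push_cast at h5
              omega
            omega
          | (c+2) =>
            rw [beta_concat_big]
            have h2 : ((v ++ [c+2]).dropLast) = v := by simp
            rw [h2]
            have h6 := (ih (m+1) (by omega)).2 v
            simp only [show m+1+3 = m+4 from rfl, show m+1+2 = m+3 from rfl] at h6
            omega

lemma beta_ge (m : ℕ) (hm : 2 ≤ m) (u : List ℕ) : (m : ℤ) - 1 ≤ beta m u := by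
  obtain ⟨t, rfl⟩ := Nat.exists_eq_add_of_le hm
  have e : 2 + t = t + 2 := by omega
  rw [e]
  have := (beta_pos t).1 u
  push_cast
  push_cast at this
  omega

lemma beta_gamma (m : ℕ) (u : List ℕ) :
    beta (m+2) u.dropLast + 1 ≤ beta (m+3) u := (beta_pos m).2 u

/-- the block `a₁a₂⋯a_j`. -/
def blk (j : ℕ) : List ℕ := (List.range j).map (· + 1)

lemma blk_succ (j : ℕ) : blk (j+1) = blk j ++ [j+1] := by
  simp [blk, List.range_succ]

lemma blk_one : blk 1 = [1] := rfl

/-- values of β on words ending with a full block. -/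
lemma beta_block (j : ℕ) :
    ∀ x : List ℕ,
      (∀ m, 2 ≤ m → m ≤ j + 3 → beta m (x ++ blk j) = (m : ℤ) - 1) ∧
        beta (j+4) (x ++ blk j) = 2 * j + 3 := by
  induction j using Nat.strong_induction_on with
  | _ j ih =>
    intro x
    match j with
    | 0 =>
      constructor
      · intro m h2 h3
        interval_cases m <;> simp [beta_two, beta_three, beta_four, blk]
      · simp [blk, beta_four]
    | 1 =>
      constructor
      · intro m h2 h3
        interval_cases m <;> simp [beta_two, beta_three, beta_four]
      · rw [blk_one, show (1:ℕ)+4 = 0+5 from rfl, beta_concat_one]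
        simp [beta_four, beta_three]
    | (j+2) =>
      have hd : x ++ blk (j+2) = (x ++ blk (j+1)) ++ [j+2] := by
        rw [blk_succ (j+1)]; simp
      have hd2 : (x ++ blk (j+1)).dropLast = x ++ blk j := by
        rw [blk_succ j]; simp
      have ih1 := ih (j+1) (by omega) x
      have ih0 := ih j (by omega) x
      constructor
      · intro m h2 h3
        rcases Nat.lt_or_ge m 5 with h5 | h5
        · interval_cases m <;> simp [beta_two, beta_three, beta_four]
        · obtain ⟨t, rfl⟩ := Nat.exists_eq_add_of_le h5
          have e : 5 + t = t + 5 := by omega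
          rw [e, hd, beta_concat_big t j, hd2]
          have v1 : beta (t+4) (x ++ blk (j+1)) = (t:ℤ) + 3 := by
            have := ih1.1 (t+4) (by omega) (by omega)
            push_cast at this; linarith
          have v2 : beta (t+3) (x ++ blk j) = (t:ℤ) + 2 := by
            have := ih0.1 (t+3) (by omega) (by omega)
            push_cast at this; linarith
          rw [v1, v2]; push_cast; ring
      · have e : j + 2 + 4 = (j+1) + 5 := by omega
        rw [e, hd, beta_concat_big (j+1) j, hd2]
        have v1 : beta (j+1+4) (x ++ blk (j+1)) = 2*(j+1) + 3 := ih1.2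
        have v2 : beta (j+1+3) (x ++ blk j) = 2*j + 3 := by
          have := ih0.2
          simpa [show j+1+3 = j+4 from rfl] using this
        rw [v1, v2]; push_cast; ring

lemma beta_five_le (u : List ℕ) : beta 5 u ≤ 5 := by
  rcases u.eq_nil_or_concat' with rfl | ⟨v, a, rfl⟩
  · rw [show (5:ℕ) = 0+5 from rfl, beta_nil]; simp [beta_four]
  · match a with
    | 0 => rw [show (5:ℕ) = 0+5 from rfl, beta_concat_zero]; simp [beta_four]
    | 1 => rw [show (5:ℕ) = 0+5 from rfl, beta_concat_one]; simp [beta_four, beta_three]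
    | (c+2) => rw [show (5:ℕ) = 0+5 from rfl, beta_concat_big]; simp [beta_four, beta_three]

/-- flatness: β is minimal up to index `M`. -/
def Flat (u : List ℕ) (M : ℕ) : Prop := ∀ m, 2 ≤ m → m ≤ M → beta m u = (m : ℤ) - 1

lemma Flat.dropLast {u : List ℕ} {M : ℕ} (h : Flat u M) : Flat u.dropLast (M-1) := by
  intro m h2 hM
  have h3 : m + 1 ≤ M := by omega
  obtain ⟨t, rfl⟩ := Nat.exists_eq_add_of_le h2
  have e : 2 + t = t + 2 := by omega
  rw [e]
  have hg := beta_gamma t u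
  have hu : beta (t+3) u = (t:ℤ) + 2 := by
    have := h (t+3) (by omega) (by omega)
    push_cast at this; linarith
  have hge := beta_ge (t+2) (by omega) u.dropLast
  push_cast at hge ⊢
  omega

lemma jac_zero {w : List ℕ} (h : w ∈ Jacquard 0) : w = [] := by simpa [Jacquard] using h

lemma jac_cases {m : ℕ} {w : List ℕ} (h : w ∈ Jacquard (m+1)) :
    (∃ u ∈ Jacquard m, w = u ++ [0]) ∨
      ∃ j, 1 ≤ j ∧ j ≤ m ∧ ∃ u ∈ Jacquard (m+1-j), w = u ++ blk j := by
  match m with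
  | 0 =>
    left
    have h1 : w = [0] := by simpa [Jacquard] using h
    exact ⟨[], by simp [Jacquard], by simpa using h1⟩
  | (m+1) =>
    rw [Jacquard] at h
    rcases h with ⟨u, hu, rfl⟩ | h
    · exact Or.inl ⟨u, hu, rfl⟩
    · simp only [Set.mem_iUnion, Set.mem_image] at h
      obtain ⟨j, ⟨hj1, hj2⟩, u, hu, rfl⟩ := h
      exact Or.inr ⟨j, hj1, by omega, u, hu, rfl⟩

lemma jac_concat_zero {m : ℕ} {u : List ℕ} (h : u ∈ Jacquard m) :
    u ++ [0] ∈ Jacquard (m+1) := by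
  match m with
  | 0 => rw [jac_zero h]; simp [Jacquard]
  | (m+1) =>
    rw [Jacquard]
    exact Or.inl ⟨u, h, rfl⟩

lemma jac_concat_blk {m j : ℕ} {u : List ℕ} (h : u ∈ Jacquard m) (hm : 1 ≤ m) (hj : 1 ≤ j) :
    u ++ blk j ∈ Jacquard (m+j) := by
  have e : m + j = (m + j - 2) + 2 := by omega
  rw [e, Jacquard]
  right
  simp only [Set.mem_iUnion, Set.mem_image]
  exact ⟨j, ⟨hj, by omega⟩, u, by rw [show m+j-2+2-j = m by omega]; exact h, rfl⟩

lemma jac_dropLast {n : ℕ} {w : List ℕ} (h : w ∈ Jacquard (n+1)) :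
    w.dropLast ∈ Jacquard n := by
  rcases jac_cases h with ⟨u, hu, rfl⟩ | ⟨j, hj1, hj2, u, hu, rfl⟩
  · simpa using hu
  · match j with
    | 1 => rw [blk_one]; simpa using hu
    | (j+2) =>
      rw [blk_succ (j+1)]
      have e : (u ++ (blk (j+1) ++ [j+1+1])).dropLast = u ++ blk (j+1) := by
        rw [← List.append_assoc]; simp
      rw [e]
      have := jac_concat_blk hu (m := n+1-(j+2)) (by omega) (j := j+1) (by omega)
      rwa [show n+1-(j+2)+(j+1) = n by omega] at this

lemma beta_nil_val : ∀ m : ℕ, beta (m+2) ([] : List ℕ) = (m : ℤ) + 1 := by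
  intro m
  induction m using Nat.strong_induction_on with
  | _ m ih =>
    match m with
    | 0 => rfl
    | 1 => rfl
    | 2 => rfl
    | (m+3) =>
      have := ih (m+2) (by omega)
      rw [show m+3+2 = m+5 from rfl, beta_nil, show m+4 = m+2+2 from rfl, this]
      push_cast; ring

lemma dropLast_concat_blk (q : List ℕ) (j : ℕ) :
    (q ++ blk (j+1)).dropLast = q ++ blk j := by
  rw [blk_succ, ← List.append_assoc]; simp

/-- a flat Jacquard word stays small one step further. -/
lemma flat_bound : ∀ n k : ℕ, 2 ≤ k → ∀ u ∈ Jacquard n, Flat u (k+2) →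
    beta (k+3) u ≤ 2*(k:ℤ)+1 := by
  intro n
  induction n using Nat.strong_induction_on with
  | _ n ih =>
    intro k hk u hu hfl
    match k, hk with
    | 2, _ => simpa using beta_five_le u
    | (t+3), _ =>
      match n with
      | 0 =>
        rw [jac_zero hu, show t+3+3 = t+4+2 from rfl, beta_nil_val]
        push_cast; omega
      | (m+1) =>
        rcases jac_cases hu with ⟨y, hy, rfl⟩ | ⟨c, hc1, hc2, y, hy, rfl⟩
        · -- ends with 0
          have hfl' : Flat y (t+4) := by
            have := hfl.dropLast
            simpa using this
          have hb := ih m (by omega) (t+2) (by omega) y hy hfl'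
          rw [show t+3+3 = t+1+5 from rfl, beta_concat_zero]
          rw [show t+2+3 = t+1+4 from rfl] at hb
          push_cast at hb ⊢; omega
        · -- ends with block c
          rcases Nat.lt_or_ge c (t+2) with hsmall | hbig
          · -- c ≤ t+1 : contradiction with flatness at index c+4
            exfalso
            have h1 := (beta_block c y).2
            have h2 := hfl (c+4) (by omega) (by omega)
            rw [h1] at h2
            push_cast at h2; omega
          · rcases Nat.eq_or_lt_of_le hbig with heq | hbig2
            · -- c = t+2 : value is exactly 2k+1
              obtain rfl : c = t+2 := heq.symm
              have h1 := (beta_block (t+2) y).2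
              rw [show t+3+3 = t+2+4 from rfl, h1]
              push_cast; omega
            · -- c ≥ t+3 : still flat at k+3
              have h1 := (beta_block c y).1 (t+6) (by omega) (by omega)
              rw [show t+3+3 = t+6 from rfl, h1]
              push_cast; omega

/-- the separation certificate: at index `i+4` the β's differ by at least 1,
at least as much as the β's of the shifts at `i+3` differ, the latter difference
being nonnegative. -/
def Good (i : ℕ) (w v : List ℕ) : Prop :=
  1 ≤ beta (i+4) w - beta (i+4) v ∧
    beta (i+3) w.dropLast - beta (i+3) v.dropLast ≤ beta (i+4) w - beta (i+4) v ∧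
      0 ≤ beta (i+3) w.dropLast - beta (i+3) v.dropLast

lemma step0 {i : ℕ} {p q : List ℕ} (h : Good i p q) : Good (i+1) (p ++ [0]) (q ++ [0]) := by
  obtain ⟨h1, h2, h3⟩ := h
  unfold Good
  rw [show i+1+4 = i+5 from rfl, show i+1+3 = i+4 from rfl, beta_concat_zero, beta_concat_zero]
  simp only [List.dropLast_concat]
  refine ⟨by omega, by omega, by omega⟩

lemma step1 {i : ℕ} {p q : List ℕ} (h : Good i p q) : Good (i+1) (p ++ [1]) (q ++ [1]) := by
  obtain ⟨h1, h2, h3⟩ := h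
  unfold Good
  rw [show i+1+4 = i+5 from rfl, show i+1+3 = i+4 from rfl, beta_concat_one, beta_concat_one]
  simp only [List.dropLast_concat]
  refine ⟨by omega, by omega, by omega⟩

lemma stepBig {i a b : ℕ} {p q : List ℕ} (h : Good i p q) :
    Good (i+1) (p ++ [a+2]) (q ++ [b+2]) := by
  obtain ⟨h1, h2, h3⟩ := h
  unfold Good
  rw [show i+1+4 = i+5 from rfl, show i+1+3 = i+4 from rfl, beta_concat_big, beta_concat_big]
  simp only [List.dropLast_concat]
  refine ⟨by omega, by omega, by omega⟩

lemma beta5_concat_zero (q : List ℕ) : beta 5 (q ++ [0]) = 4 := by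
  rw [show (5:ℕ) = 0+5 from rfl, beta_concat_zero, beta_four]; norm_num

lemma beta5_concat_big (q : List ℕ) (c : ℕ) : beta 5 (q ++ [c+2]) = 4 := by
  rw [show (5:ℕ) = 0+5 from rfl, beta_concat_big, beta_four, beta_three]; ring

lemma good_one (p : List ℕ) {v : List ℕ} (hv : beta 5 v = 4) : Good 1 (p ++ [1]) v := by
  unfold Good
  rw [show (1:ℕ)+4 = 0+5 from rfl, show (1:ℕ)+3 = 4 from rfl, beta_concat_one, hv,
    beta_four, beta_four, beta_four, beta_three]
  refine ⟨by omega, by omega, by omega⟩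

/-- the hard case: a word ending in `a₀` against a word ending in a block of length ≥ 2. -/
lemma good_hard {m : ℕ} {p : List ℕ} (hp : p ∈ Jacquard m) (q : List ℕ) (t : ℕ) :
    ∃ i, Good i (p ++ [0]) (q ++ blk (t+2)) ∨ Good i (q ++ blk (t+2)) (p ++ [0]) := by
  by_cases hex : ∃ s : ℕ, s ≤ t ∧ ((s:ℤ) + 4) ≤ beta (s+4) p
  · obtain ⟨s, hs, hbig⟩ := hex
    refine ⟨s+1, Or.inl ?_⟩
    unfold Good
    rw [show s+1+4 = s+5 from rfl, show s+1+3 = s+4 from rfl, beta_concat_zero]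
    have hv1 : beta (s+5) (q ++ blk (t+2)) = (s:ℤ)+4 := by
      have h := (beta_block (t+2) q).1 (s+5) (by omega) (by omega)
      rw [h]; push_cast; ring
    have hv2 : beta (s+4) ((q ++ blk (t+2)).dropLast) = (s:ℤ)+3 := by
      rw [show t+2 = t+1+1 from rfl, dropLast_concat_blk]
      have h := (beta_block (t+1) q).1 (s+4) (by omega) (by omega)
      rw [h]; push_cast; ring
    rw [hv1, hv2]
    simp only [List.dropLast_concat]
    refine ⟨by omega, by omega, by omega⟩
  · push_neg at hex
    have hfl : Flat p (t+4) := by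
      intro m2 h2 hM
      match m2, h2 with
      | 2, _ => rw [beta_two]; norm_num
      | 3, _ => rw [beta_three]; norm_num
      | (s+4), _ =>
        have hlt := hex s (by omega)
        have hge := beta_ge (s+4) (by omega) p
        push_cast at hge ⊢
        omega
    have hb := flat_bound m (t+2) (by omega) p hp (by
      simpa [show t+2+2 = t+4 from rfl] using hfl)
    refine ⟨t+2, Or.inr ?_⟩
    unfold Good
    rw [show t+2+4 = t+1+5 from rfl, show t+2+3 = t+5 from rfl, beta_concat_zero]
    have hv1 : beta (t+1+5) (q ++ blk (t+2)) = 2*((t:ℤ)+2)+3 := by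
      have h := (beta_block (t+2) q).2
      rw [show t+1+5 = t+2+4 from rfl, h]; push_cast; ring
    have hv2 : beta (t+5) ((q ++ blk (t+2)).dropLast) = 2*((t:ℤ)+1)+3 := by
      rw [show t+2 = t+1+1 from rfl, dropLast_concat_blk]
      have h := (beta_block (t+1) q).2
      rw [show t+5 = t+1+4 from rfl, h]; push_cast; ring
    rw [hv1, hv2]
    simp only [List.dropLast_concat, show t+1+4 = t+5 from rfl]
    rw [show t+2+3 = t+5 from rfl] at hb
    push_cast at hb ⊢
    refine ⟨by omega, by omega, by omega⟩

lemma main : ∀ n : ℕ, ∀ w ∈ Jacquard n, ∀ v ∈ Jacquard n, w ≠ v →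
    ∃ i, Good i w v ∨ Good i v w := by
  intro n
  induction n using Nat.strong_induction_on with
  | _ n ih =>
    intro w hw v hv hne
    match n with
    | 0 => exact absurd (by rw [jac_zero hw, jac_zero hv]) hne
    | (m+1) =>
      rcases jac_cases hw with ⟨p, hp, rfl⟩ | ⟨a, ha1, ha2, p, hp, rfl⟩ <;>
        rcases jac_cases hv with ⟨q, hq, rfl⟩ | ⟨b, hb1, hb2, q, hq, rfl⟩
      · -- zero / zero
        have hpq : p ≠ q := fun h => hne (by rw [h])
        obtain ⟨i, h | h⟩ := ih m (by omega) p hp q hq hpq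
        · exact ⟨i+1, Or.inl (step0 h)⟩
        · exact ⟨i+1, Or.inr (step0 h)⟩
      · -- zero / block b
        match b, hb1 with
        | 1, _ => exact ⟨1, Or.inr (by rw [blk_one]; exact good_one q (beta5_concat_zero p))⟩
        | (t+2), _ => exact good_hard hp q t
      · -- block a / zero
        match a, ha1 with
        | 1, _ => exact ⟨1, Or.inl (by rw [blk_one]; exact good_one p (beta5_concat_zero q))⟩
        | (t+2), _ =>
          obtain ⟨i, h | h⟩ := good_hard hq p t
          · exact ⟨i, Or.inr h⟩
          · exact ⟨i, Or.inl h⟩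
      · -- block a / block b
        match a, ha1, b, hb1 with
        | 1, _, 1, _ =>
          rw [blk_one] at hne ⊢
          have hpq : p ≠ q := fun h => hne (by rw [h])
          obtain ⟨i, h | h⟩ := ih m (by omega) p hp q hq hpq
          · exact ⟨i+1, Or.inl (step1 h)⟩
          · exact ⟨i+1, Or.inr (step1 h)⟩
        | 1, _, (s+2), _ =>
          refine ⟨1, Or.inl ?_⟩
          rw [blk_one]
          refine good_one p ?_
          rw [show s+2 = s+1+1 from rfl, blk_succ, ← List.append_assoc]
          exact beta5_concat_big _ s
        | (s+2), _, 1, _ =>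
          refine ⟨1, Or.inr ?_⟩
          rw [blk_one]
          refine good_one q ?_
          rw [show s+2 = s+1+1 from rfl, blk_succ, ← List.append_assoc]
          exact beta5_concat_big _ s
        | (s+2), _, (r+2), _ =>
          have ew : p ++ blk (s+2) = (p ++ blk (s+1)) ++ [s+2] := by
            rw [show s+2 = s+1+1 from rfl, blk_succ, ← List.append_assoc]
          have ev : q ++ blk (r+2) = (q ++ blk (r+1)) ++ [r+2] := by
            rw [show r+2 = r+1+1 from rfl, blk_succ, ← List.append_assoc]
          have hw' : p ++ blk (s+1) ∈ Jacquard m := by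
            have := jac_dropLast hw
            rwa [show s+2 = s+1+1 from rfl, dropLast_concat_blk] at this
          have hv' : q ++ blk (r+1) ∈ Jacquard m := by
            have := jac_dropLast hv
            rwa [show r+2 = r+1+1 from rfl, dropLast_concat_blk] at this
          have hne' : p ++ blk (s+1) ≠ q ++ blk (r+1) := by
            intro hEq
            have hlast : s + 1 = r + 1 := by
              have h1 : (p ++ blk (s+1)).getLast? = some (s+1) := by
                rw [blk_succ, ← List.append_assoc]; simp
              have h2 : (q ++ blk (r+1)).getLast? = some (r+1) := by
                rw [blk_succ, ← List.append_assoc]; simp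
              rw [hEq, h2] at h1
              exact (Option.some_inj.mp h1).symm
            apply hne
            have hsr : s = r := by omega
            rw [ew, ev, hEq, hsr]
          obtain ⟨i, h | h⟩ := ih m (by omega) _ hw' _ hv' hne'
          · exact ⟨i+1, Or.inl (by rw [ew, ev]; exact stepBig (a := s) (b := r) h)⟩
          · exact ⟨i+1, Or.inr (by rw [ew, ev]; exact stepBig (a := r) (b := s) h)⟩

/-- Combinatorial core of Theorem 5.4: two distinct words of the same Jacquard
language `J_n` are separated by some function `β_{i₀}`, `i₀ ≥ 2`; equivalently, the map
`w ↦ (β_i(w))_{i ≥ 2}` is injective on `J_n`. -/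
theorem beta_separates_jacquard (n : ℕ) (w w' : List ℕ)
    (hw : w ∈ Jacquard n) (hw' : w' ∈ Jacquard n) (hne : w ≠ w') :
    ∃ i₀, 2 ≤ i₀ ∧ beta i₀ w ≠ beta i₀ w' := by
  obtain ⟨i, h | h⟩ := main n w hw w' hw' hne
  · exact ⟨i+4, by omega, fun he => by have h1 := h.1; omega⟩
  · exact ⟨i+4, by omega, fun he => by have h1 := h.1; omega⟩
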